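/- arXiv:2509.21019 — 2 statements merged into one kernel-verified Lean document; each statement's English description precedes it below -/
import Mathlib

section
/- Let n and N be non-negative integers, and let P be any real trigonometric polynomial of degree at most N such that 𝓑_{n+1}(θ) ≤ P(θ) for every θ ∈ ℝ and ∫_0^1 P(θ) dθ = M_{n+1}/(N+1)^{n+1}. Then for every integer k with 1 ≤ |k| ≤ N, |P̂(k)| ≤ M_{n+1}/(N+1)^{n+1} + (n+1)!/(2π|k|)^{n+1}. -/
/-!
On `(0, 1)` the majorant `P` differs from the Bernoulli polynomial `B = B_{n+1}` by the nonnegative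
function `P - B`, whose mean is `∫ P - ∫ B = M_{n+1} / (N + 1)^{n+1}` since `B` has mean zero.
Hence `P̂(k) = (P - B)^(k) + B̂(k)`, where the first term is bounded by that mean (a nonnegative
function dominates its Fourier coefficients) and `|B̂(k)| = (n + 1)! / (2π|k|)^{n+1}`.
-/

open Polynomial

noncomputable section

open scoped Classical

/-- `e(x) = e^{2πix}`. -/
def e2pi (x : ℝ) : ℂ := Complex.exp (2 * Real.pi * Complex.I * x)

/-- The sawtooth function `𝓑₁`. -/
noncomputable def sawtooth (x : ℝ) : ℝ :=
  if ∃ n : ℤ, x = (n : ℝ) then 0 else x - ⌊x⌋ - 1 / 2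

/-- The Bernoulli periodic function `𝓑ₙ`. -/
noncomputable def bernoulliPeriodic (n : ℕ) (x : ℝ) : ℝ :=
  if n = 1 then sawtooth x else bernoulliFun n (Int.fract x)

/-- `Mₙ = max_{x ∈ [0,1]} Bₙ(x)`. -/
def bernoulliMax (n : ℕ) : ℝ := sSup (bernoulliFun n '' Set.Icc (0 : ℝ) 1)

/-- `mₙ = min_{x ∈ [0,1]} Bₙ(x)`. -/
def bernoulliMin (n : ℕ) : ℝ := sInf (bernoulliFun n '' Set.Icc (0 : ℝ) 1)

/-- A real trigonometric polynomial of degree at most `N`. -/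
def IsTrigPoly (N : ℕ) (T : ℝ → ℝ) : Prop :=
  ∃ a : ℤ → ℂ, ∀ θ : ℝ, (T θ : ℂ) = ∑ k ∈ Finset.Icc (-(N : ℤ)) (N : ℤ), a k * e2pi (k * θ)

/-- The `k`-th Fourier coefficient of a `1`-periodic function. -/
def fourierCoeff' (f : ℝ → ℝ) (k : ℤ) : ℂ := ∫ θ in (0:ℝ)..1, (f θ : ℂ) * e2pi (-(k * θ))

/-- The normalized periodic indicator function of the interval `[α, β]`. -/
noncomputable def periodicIndicator (α β θ : ℝ) : ℝ :=
  if ∃ n : ℤ, θ + (n : ℝ) ∈ Set.Ioo α β then 1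
  else if ∃ n : ℤ, θ + (n : ℝ) = α ∨ θ + (n : ℝ) = β then 1 / 2
  else 0

variable (F : Type) [Field F] [Fintype F]

/-- The quadratic residue symbol `(f/P)` modulo a prime polynomial `P`. -/
noncomputable def quadResSymbol (P f : Polynomial F) : ℤ :=
  if P ∣ f then 0 else if ∃ g : Polynomial F, P ∣ (g ^ 2 - f) then 1 else -1

/-- `χ` is the quadratic character `χ_D`: completely multiplicative on monic polynomials,
with `χ(Q) = (D/Q)` for every prime polynomial `Q`. -/
def IsQuadCharOf (D : Polynomial F) (χ : Polynomial F → ℝ) : Prop :=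
  χ 1 = 1 ∧
  (∀ f h : Polynomial F, f.Monic → h.Monic → χ (f * h) = χ f * χ h) ∧
  ∀ Q : Polynomial F, Q.Monic → Irreducible Q → χ Q = (quadResSymbol F Q D : ℝ)

/-- `c_k = ∑_{f monic, deg f = k} χ(f)`. -/
def coeffSum (χ : Polynomial F → ℝ) (k : ℕ) : ℝ :=
  ∑ᶠ f ∈ {f : Polynomial F | f.Monic ∧ f.natDegree = k}, χ f

/-- The von Mangoldt function for monic polynomials. -/
noncomputable def polyVonMangoldt (f : Polynomial F) : ℝ :=
  if h : ∃ P : Polynomial F, (P.Monic ∧ Irreducible P) ∧ ∃ m : ℕ, 1 ≤ m ∧ f = P ^ m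
  then ((Classical.choose h).natDegree : ℝ) else 0

/-- The factorization of `𝓛(u, χ_D) = ∑ c_k u^k` over its zeros `q^{-1/2} e(θⱼ)`. -/
def LFactorization (χ : Polynomial F → ℝ) (g : ℕ) (θz : Fin (2 * g) → ℝ) : Prop :=
  ∀ u : ℂ, ‖u‖ < 1 / (Fintype.card F : ℝ) →
    HasSum (fun k : ℕ => (coeffSum F χ k : ℂ) * u ^ k)
      (∏ j : Fin (2 * g), (1 - u * (Real.sqrt (Fintype.card F) : ℂ) * e2pi (-(θz j))))

open MeasureTheory Real
open scoped Nat

lemma norm_e2pi (x : ℝ) : ‖e2pi x‖ = 1 := by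
  simp [e2pi, Complex.norm_exp]

@[fun_prop]
lemma continuous_e2pi : Continuous e2pi := by
  unfold e2pi; fun_prop

lemma IsTrigPoly.continuous {N : ℕ} {T : ℝ → ℝ} (hT : IsTrigPoly N T) : Continuous T := by
  obtain ⟨a, ha⟩ := hT
  have hT : T = fun θ ↦ (∑ k ∈ Finset.Icc (-(N : ℤ)) N, a k * e2pi (k * θ)).re := by
    funext θ; rw [← ha θ, Complex.ofReal_re]
  rw [hT]
  fun_prop

lemma fourierCoeff'_sub {f g : ℝ → ℝ} (hf : IntervalIntegrable f volume 0 1)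
    (hg : IntervalIntegrable g volume 0 1) (k : ℤ) :
    fourierCoeff' (f - g) k = fourierCoeff' f k - fourierCoeff' g k := by
  have hprod {u : ℝ → ℝ} (hu : IntervalIntegrable u volume 0 1) :
      IntervalIntegrable (fun θ ↦ (u θ : ℂ) * e2pi (-(k * θ))) volume 0 1 :=
    IntervalIntegrable.mul_continuousOn ⟨hu.1.ofReal, hu.2.ofReal⟩ (by fun_prop)
  rw [fourierCoeff', fourierCoeff', fourierCoeff',
    ← intervalIntegral.integral_sub (hprod hf) (hprod hg)]
  congr 1 with θ
  simp only [Pi.sub_apply, Complex.ofReal_sub]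
  ring

lemma norm_fourierCoeff'_le_integral {f : ℝ → ℝ} (hf : IntervalIntegrable f volume 0 1)
    (hf_nonneg : ∀ x ∈ Set.Ioo (0 : ℝ) 1, 0 ≤ f x) (k : ℤ) :
    ‖fourierCoeff' f k‖ ≤ ∫ θ in (0 : ℝ)..1, f θ := by
  refine intervalIntegral.norm_integral_le_of_norm_le zero_le_one ?_ hf
  filter_upwards [(Set.countable_singleton (1 : ℝ)).ae_notMem volume] with x hx1 hx
  rw [norm_mul, norm_e2pi, mul_one, Complex.norm_real, Real.norm_eq_abs,
    abs_of_nonneg (hf_nonneg x ⟨hx.1, lt_of_le_of_ne hx.2 hx1⟩)]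

-- Only on the open interval: at the integers `𝓑₁ = 0`, while `B₁(0) = -1/2`.
lemma bernoulliPeriodic_eq_bernoulliFun {m : ℕ} (hm : m ≠ 0) {x : ℝ}
    (hx : x ∈ Set.Ioo (0 : ℝ) 1) : bernoulliPeriodic m x = bernoulliFun m x := by
  have hfloor : ⌊x⌋ = 0 := Int.floor_eq_zero_iff.2 ⟨hx.1.le, hx.2⟩
  by_cases h1 : m = 1
  · subst h1
    have hx_not_int : ¬ ∃ j : ℤ, x = j := by
      rintro ⟨j, rfl⟩
      rw [Int.floor_intCast] at hfloor
      simp [hfloor] at hx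
    simp [bernoulliPeriodic, sawtooth, hx_not_int, hfloor, bernoulliFun_one]
  · rw [bernoulliPeriodic, if_neg h1, Int.fract, hfloor, Int.cast_zero, sub_zero]

lemma fourierCoeff'_bernoulliFun {m : ℕ} (hm : m ≠ 0) (k : ℤ) :
    fourierCoeff' (bernoulliFun m) k = -(m ! : ℂ) / (2 * π * Complex.I * k) ^ m := by
  rw [← bernoulliFourierCoeff_eq hm k, bernoulliFourierCoeff,
    fourierCoeffOn_eq_integral _ _ zero_lt_one, fourierCoeff']
  simp only [sub_zero, one_div, inv_one, one_smul, smul_eq_mul]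
  congr 1 with x
  rw [mul_comm, fourier_coe_apply, e2pi]
  push_cast
  ring_nf

lemma norm_fourierCoeff'_bernoulliFun {m : ℕ} (hm : m ≠ 0) (k : ℤ) :
    ‖fourierCoeff' (bernoulliFun m) k‖ = (m ! : ℝ) / (2 * π * |(k : ℝ)|) ^ m := by
  rw [fourierCoeff'_bernoulliFun hm, norm_div, norm_neg, norm_pow]
  simp [abs_of_pos pi_pos]

/-- Fourier coefficient bound for any extremal majorant of `𝓑_{n+1}`. -/
theorem statement10 (n N : ℕ) (P : ℝ → ℝ) (hP : IsTrigPoly N P)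
    (hmaj : ∀ θ : ℝ, bernoulliPeriodic (n + 1) θ ≤ P θ)
    (hint : (∫ θ in (0:ℝ)..1, P θ) = bernoulliMax (n + 1) / (N + 1) ^ (n + 1)) :
    ∀ k : ℤ, 1 ≤ |k| → |k| ≤ (N : ℤ) →
      ‖fourierCoeff' P k‖ ≤ bernoulliMax (n + 1) / (N + 1) ^ (n + 1)
        + (Nat.factorial (n + 1) : ℝ) / (2 * Real.pi * |(k : ℝ)|) ^ (n + 1) := by
  intro k _ _
  set B := bernoulliFun (n + 1)
  have hPi : IntervalIntegrable P volume 0 1 := hP.continuous.intervalIntegrable 0 1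
  have hBi : IntervalIntegrable B volume 0 1 :=
    (Polynomial.continuous_aeval _).intervalIntegrable 0 1
  have hgap_nonneg : ∀ x ∈ Set.Ioo (0 : ℝ) 1, 0 ≤ (P - B) x := fun x hx ↦ by
    simpa [B, ← bernoulliPeriodic_eq_bernoulliFun n.succ_ne_zero hx] using hmaj x
  have hgap_mean : ∫ θ in (0 : ℝ)..1, (P - B) θ = bernoulliMax (n + 1) / (N + 1) ^ (n + 1) := by
    rw [Pi.sub_def, intervalIntegral.integral_sub hPi hBi, hint,
      integral_bernoulliFun_eq_zero n.succ_ne_zero, sub_zero]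
  calc ‖fourierCoeff' P k‖ = ‖fourierCoeff' (P - B) k + fourierCoeff' B k‖ := by
        rw [fourierCoeff'_sub hPi hBi, sub_add_cancel]
    _ ≤ ‖fourierCoeff' (P - B) k‖ + ‖fourierCoeff' B k‖ := norm_add_le _ _
    _ ≤ _ := by
        rw [norm_fourierCoeff'_bernoulliFun n.succ_ne_zero, ← hgap_mean]
        gcongr
        exact norm_fourierCoeff'_le_integral (hPi.sub hBi) hgap_nonneg k
end
end

section
/- For every even integer n ≥ 2, writing M_{n+1} := max_{x∈[0,1]} B_{n+1}(x) and m_{n+1} := min_{x∈[0,1]} B_{n+1}(x), one has (π^n/2)·M_{n+1}/(n+1)! < (√2/(π·2^{n+1})) · √((1 − 2^{−n−2})(1 − 2^{−n+1}) ζ(n) ζ(n+2)/(1 − 2^{−n})) and −(π^n/2)·m_{n+1}/(n+1)! < (√2/(π·2^{n+1})) · √((1 − 2^{−n−2})(1 − 2^{−n+1}) ζ(n) ζ(n+2)/(1 − 2^{−n})). -/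
open Polynomial

noncomputable section

open scoped Classical

variable (F : Type) [Field F] [Fintype F]

/-!
The Fourier expansion of the odd Bernoulli polynomial `B_{n+1}`
(`hasSum_one_div_nat_pow_mul_sin`) bounds `|B_{n+1}|` on `[0, 1]` by `2 (n+1)! ζ(n+1) / (2π)^(n+1)`,
so both left-hand sides are at most `ζ(n+1) / (π 2^(n+1))`. By Cauchy–Schwarz
`ζ(n+1)² ≤ ζ(n) ζ(n+2)`, and with `a = 2^(-n) ≤ 1/4` the remaining factor
`2 (1 - a/4) (1 - 2a) / (1 - a)` exceeds `1`, since `2 (1 - a/4) (1 - 2a) - (1 - a) = 1 - 7a/2 + a²`.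
-/

open Real Set
open scoped Nat

lemma riemannZeta_natCast_re_eq_tsum {s : ℕ} (hs : 1 < s) :
    (riemannZeta s).re = ∑' m : ℕ, 1 / (m : ℝ) ^ s := by
  rw [zeta_nat_eq_tsum_of_gt_one hs, ← Complex.ofReal_re (∑' m : ℕ, 1 / (m : ℝ) ^ s),
    Complex.ofReal_tsum]
  push_cast
  rfl

theorem tsum_mul_sq_le_sq_mul_sq_of_nonneg {ι : Type*} {f g : ι → ℝ} (hf : ∀ i, 0 ≤ f i)
    (hg : ∀ i, 0 ≤ g i) (hf2 : Summable fun i => f i ^ 2) (hg2 : Summable fun i => g i ^ 2) :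
    (∑' i, f i * g i) ^ 2 ≤ (∑' i, f i ^ 2) * ∑' i, g i ^ 2 := by
  have h := inner_le_Lp_mul_Lq_tsum_of_nonneg Real.HolderConjugate.two_two hf hg
    (by simpa only [rpow_two] using hf2) (by simpa only [rpow_two] using hg2)
  simp only [rpow_two, ← sqrt_eq_rpow] at h
  calc (∑' i, f i * g i) ^ 2 ≤ (√(∑' i, f i ^ 2) * √(∑' i, g i ^ 2)) ^ 2 :=
        pow_le_pow_left₀ (tsum_nonneg fun i => mul_nonneg (hf i) (hg i)) h 2
    _ = (∑' i, f i ^ 2) * ∑' i, g i ^ 2 := by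
        rw [mul_pow, sq_sqrt (tsum_nonneg fun i => sq_nonneg _),
          sq_sqrt (tsum_nonneg fun i => sq_nonneg _)]

theorem sq_tsum_one_div_pow_succ_le {n : ℕ} (hn : Even n) (hn0 : n ≠ 0) :
    (∑' m : ℕ, 1 / (m : ℝ) ^ (n + 1)) ^ 2 ≤
      (∑' m : ℕ, 1 / (m : ℝ) ^ n) * ∑' m : ℕ, 1 / (m : ℝ) ^ (n + 2) := by
  obtain ⟨k, rfl⟩ := hn
  have hsq (j : ℕ) :
      (fun m : ℕ => (1 / (m : ℝ) ^ j) ^ 2) = fun m : ℕ => 1 / (m : ℝ) ^ (j + j) := by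
    ext m; rw [one_div_pow, ← pow_mul, mul_two]
  have key := tsum_mul_sq_le_sq_mul_sq_of_nonneg (f := fun m : ℕ => 1 / (m : ℝ) ^ k)
    (g := fun m : ℕ => 1 / (m : ℝ) ^ (k + 1)) (fun m => by positivity) (fun m => by positivity)
    (by rw [hsq]; exact Real.summable_one_div_nat_pow.mpr (by omega))
    (by rw [hsq]; exact Real.summable_one_div_nat_pow.mpr (by omega))
  rw [hsq, hsq] at key
  convert key using 3
  · ext m
    rw [div_mul_div_comm, one_mul, ← pow_add, ← add_assoc]
  · rw [show k + 1 + (k + 1) = k + k + 2 by omega]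

theorem lt_sqrt_two_mul_sqrt {n : ℕ} (hn : 2 ≤ n) {x y z : ℝ} (hz : 0 < z)
    (hxy : z ^ 2 ≤ x * y) :
    z < √2 * √((1 - ((2 : ℝ) ^ (n + 2))⁻¹) * (1 - 2 * ((2 : ℝ) ^ n)⁻¹) * x * y /
      (1 - ((2 : ℝ) ^ n)⁻¹)) := by
  set a := ((2 : ℝ) ^ n)⁻¹ with ha_def
  have ha0 : 0 < a := by positivity
  have ha : a ≤ 1 / 4 := by
    rw [ha_def, one_div]
    refine inv_anti₀ (by norm_num) ?_
    calc (4 : ℝ) = 2 ^ 2 := by norm_num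
      _ ≤ 2 ^ n := pow_le_pow_right₀ (by norm_num) hn
  have h4 : ((2 : ℝ) ^ (n + 2))⁻¹ = a / 4 := by rw [pow_add, mul_inv, ha_def]; ring
  rw [h4, ← sqrt_mul zero_le_two, lt_sqrt hz.le, ← mul_div_assoc, lt_div_iff₀ (by linarith)]
  have hc : 1 - a < 2 * ((1 - a / 4) * (1 - 2 * a)) := by nlinarith
  have hxy' := mul_le_mul_of_nonneg_left hxy (by nlinarith : 0 ≤ 2 * ((1 - a / 4) * (1 - 2 * a)))
  nlinarith [mul_lt_mul_of_pos_right hc (pow_pos hz 2)]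

theorem abs_bernoulliFun_le {n : ℕ} (hn : Odd n) (hn1 : n ≠ 1) {x : ℝ}
    (hx : x ∈ Icc (0 : ℝ) 1) :
    |bernoulliFun n x| ≤ 2 * n ! / (2 * π) ^ n * ∑' m : ℕ, 1 / (m : ℝ) ^ n := by
  obtain ⟨k, rfl⟩ := hn
  have h := (hasSum_one_div_nat_pow_mul_sin (by omega : k ≠ 0) hx).norm_le_of_bounded
    (Real.summable_one_div_nat_pow.mpr (by omega : 1 < 2 * k + 1)).hasSum fun m => by
      rw [norm_mul, Real.norm_of_nonneg (by positivity)]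
      exact mul_le_of_le_one_right (by positivity) (Real.abs_sin_le_one _)
  have hc : 0 < (2 * π) ^ (2 * k + 1) / 2 / (2 * k + 1)! := by positivity
  rw [← bernoulliFun, norm_mul, Real.norm_eq_abs, Real.norm_eq_abs, abs_div, abs_div, abs_mul,
    abs_pow, abs_neg, abs_one, one_pow, one_mul, ← abs_div, ← abs_div, abs_of_pos hc,
    ← le_div_iff₀' hc] at h
  refine h.trans_eq ?_
  field_simp

theorem bernoulliMax_le {n : ℕ} (hn : Odd n) (hn1 : n ≠ 1) :
    bernoulliMax n ≤ 2 * n ! / (2 * π) ^ n * ∑' m : ℕ, 1 / (m : ℝ) ^ n :=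
  csSup_le ((nonempty_Icc.2 zero_le_one).image _) fun _ ⟨_, hx, hy⟩ =>
    hy ▸ (le_abs_self _).trans (abs_bernoulliFun_le hn hn1 hx)

theorem neg_bernoulliMin_le {n : ℕ} (hn : Odd n) (hn1 : n ≠ 1) :
    -bernoulliMin n ≤ 2 * n ! / (2 * π) ^ n * ∑' m : ℕ, 1 / (m : ℝ) ^ n :=
  neg_le.mpr <| le_csInf ((nonempty_Icc.2 zero_le_one).image _) fun _ ⟨_, hx, hy⟩ =>
    hy ▸ neg_le_of_abs_le (abs_bernoulliFun_le hn hn1 hx)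

/-- for even `n ≥ 2`, the function-field constants `A_n^±` are strictly
smaller than the number-field constants `C_n^±`. -/
theorem statement16 (n : ℕ) (hn : 2 ≤ n) (he : Even n) :
    Real.pi ^ n / 2 * bernoulliMax (n + 1) / (Nat.factorial (n + 1) : ℝ)
      < Real.sqrt 2 / (Real.pi * 2 ^ (n + 1)) *
          Real.sqrt ((1 - ((2 : ℝ) ^ (n + 2))⁻¹) * (1 - 2 * ((2 : ℝ) ^ n)⁻¹)
            * (riemannZeta n).re * (riemannZeta (n + 2)).re / (1 - ((2 : ℝ) ^ n)⁻¹)) ∧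
    -(Real.pi ^ n / 2 * bernoulliMin (n + 1) / (Nat.factorial (n + 1) : ℝ))
      < Real.sqrt 2 / (Real.pi * 2 ^ (n + 1)) *
          Real.sqrt ((1 - ((2 : ℝ) ^ (n + 2))⁻¹) * (1 - 2 * ((2 : ℝ) ^ n)⁻¹)
            * (riemannZeta n).re * (riemannZeta (n + 2)).re / (1 - ((2 : ℝ) ^ n)⁻¹)) := by
  rw [show (n : ℂ) + 2 = (n + 2 : ℕ) by push_cast; rfl,
    riemannZeta_natCast_re_eq_tsum (by omega), riemannZeta_natCast_re_eq_tsum (by omega)]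
  set ζ := fun s : ℕ => ∑' m : ℕ, 1 / (m : ℝ) ^ s
  have hpos : 0 < ζ (n + 1) :=
    (Real.summable_one_div_nat_pow.mpr (by omega)).tsum_pos (fun _ => by positivity) 1 (by simp)
  have hζ := lt_sqrt_two_mul_sqrt hn hpos (sq_tsum_one_div_pow_succ_le he (by omega))
  have hbound : ∀ t ≤ 2 * (n + 1)! / (2 * π) ^ (n + 1) * ζ (n + 1),
      π ^ n / 2 * t / (n + 1)! < √2 / (π * 2 ^ (n + 1)) * √((1 - ((2 : ℝ) ^ (n + 2))⁻¹) *
        (1 - 2 * ((2 : ℝ) ^ n)⁻¹) * ζ n * ζ (n + 2) / (1 - ((2 : ℝ) ^ n)⁻¹)) := by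
    intro t ht
    calc π ^ n / 2 * t / (n + 1)!
        ≤ π ^ n / 2 * (2 * (n + 1)! / (2 * π) ^ (n + 1) * ζ (n + 1)) / (n + 1)! := by gcongr
      _ = ζ (n + 1) / (π * 2 ^ (n + 1)) := by field_simp; ring
      _ < _ := by
        rw [div_mul_eq_mul_div]
        exact div_lt_div_of_pos_right hζ (by positivity)
  refine ⟨hbound _ (bernoulliMax_le he.add_one (by omega)), ?_⟩
  rw [← neg_div, ← mul_neg]
  exact hbound _ (neg_bernoulliMin_le he.add_one (by omega))
end
end
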